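/- Let G = F ⋈ Γ with F = ℤ/2 = ⟨t⟩, Γ = ℤ/4 × ℤ/2 = ⟨x⟩ × ⟨y⟩, and action x ◁ t = x, y ◁ t = x²y (so G ≅ ⟨x, y, t | x⁴ = y² = t² = 1, xy = yx, xt = tx, tyt = x²y⟩). Define ω: G³ → ℂ* by ω(t^q x^i y^j, t^r x^k y^l, t^s x^m y^n) = (−1)^{jks}. Then ω is a 3-cocycle on G, i.e., for all a, b, c, d ∈ G: ω(b, c, d) · ω(a, bc, d) · ω(a, b, c) = ω(ab, c, d) · ω(a, b, cd). -/

import Mathlib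

/-- The group `G = F ⋈ Γ` with `F = ℤ/2 = ⟨t⟩`, `Γ = ℤ/4 × ℤ/2 = ⟨x⟩ × ⟨y⟩` and action
`x ◁ t = x`, `y ◁ t = x²y`; the element `⟨q, i, j⟩` stands for `t^q x^i y^j`. -/
structure GA where
  q : ZMod 2
  i : ZMod 4
  j : ZMod 2
deriving DecidableEq, Fintype

namespace GA

/-- Group law: `(t^q x^i y^j)(t^r x^k y^l) = t^(q+r) x^(i+2rj+k) y^(j+l)`. -/
def gmul (a b : GA) : GA :=
  ⟨a.q + b.q, a.i + (if b.q = 1 ∧ a.j = 1 then 2 else 0) + b.i, a.j + b.j⟩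

def gone : GA := ⟨0, 0, 0⟩

def ginv (a : GA) : GA := ⟨a.q, -a.i - (if a.q = 1 ∧ a.j = 1 then 2 else 0), a.j⟩

lemma gmul_assoc : ∀ a b c : GA, gmul (gmul a b) c = gmul a (gmul b c) := by
  rintro ⟨q1, i1, j1⟩ ⟨q2, i2, j2⟩ ⟨q3, i3, j3⟩
  simp only [gmul, mk.injEq]
  refine ⟨add_assoc _ _ _, ?_, add_assoc _ _ _⟩
  have key : ∀ q2 q3 j1 j2 : ZMod 2,
      ((if q2 = 1 ∧ j1 = 1 then 2 else 0) + (if q3 = 1 ∧ j1 + j2 = 1 then 2 else 0) : ZMod 4) =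
        (if q2 + q3 = 1 ∧ j1 = 1 then 2 else 0) + (if q3 = 1 ∧ j2 = 1 then 2 else 0) := by
    decide
  have e : ∀ (a b c d x y z : ZMod 4), a + b = c + d → x + a + y + b + z = x + c + (y + d + z) := by
    intro a b c d x y z h; linear_combination h
  exact e _ _ _ _ _ _ _ (key q2 q3 j1 j2)

lemma gone_gmul : ∀ a : GA, gmul gone a = a := by
  rintro ⟨q, i, j⟩
  simp [gmul, gone]

lemma gmul_gone : ∀ a : GA, gmul a gone = a := by
  rintro ⟨q, i, j⟩
  simp [gmul, gone]

lemma ginv_gmul : ∀ a : GA, gmul (ginv a) a = gone := by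
  rintro ⟨q, i, j⟩
  simp only [gmul, ginv, gone, mk.injEq]
  have h2 : ∀ z : ZMod 2, z + z = 0 := by decide
  have h4 : ∀ (i c : ZMod 4), -i - c + c + i = 0 := by intro i c; ring
  exact ⟨h2 q, h4 _ _, h2 j⟩

instance : Group GA where
  mul := gmul
  one := gone
  inv := ginv
  mul_assoc := gmul_assoc
  one_mul := gone_gmul
  mul_one := gmul_gone
  inv_mul_cancel := ginv_gmul

end GA

def xA : GA := ⟨0, 1, 0⟩
def yA : GA := ⟨0, 0, 1⟩
def tA : GA := ⟨1, 0, 0⟩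

/-- `ω(t^q x^i y^j, t^r x^k y^l, t^s x^m y^n) = (−1)^(jks)`. -/
noncomputable def ωA (a b c : GA) : ℂˣ := (-1 : ℂˣ) ^ (a.j.val * b.i.val * c.q.val)

/-!
Each factor of the exponent `jks` of `ω(t^q x^i y^j, t^r x^k y^l, t^s x^m y^n) = (−1)^(jks)`
is, read mod 2, a homomorphism `G → ℤ/2`: for `q` and `j` this is the group law, and for the
exponent of `x` the twist `x^(2rj)` vanishes mod 2. So the exponent is the cup product of three
1-cocycles, hence a 3-cocycle with values in `ℤ/2`, and `ω` is its image under the character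
`ℤ/2 → ℂˣ`, `m ↦ (−1)^m`.
-/

theorem cup_product_cocycle {G R : Type*} [Mul G] [NonUnitalNonAssocSemiring R]
    (f g h : G → R) (hf : ∀ a b, f (a * b) = f a + f b) (hg : ∀ a b, g (a * b) = g a + g b)
    (hh : ∀ a b, h (a * b) = h a + h b) (a b c d : G) :
    f b * g c * h d + f a * g (b * c) * h d + f a * g b * h c =
      f (a * b) * g c * h d + f a * g b * h (c * d) := by
  simp only [hf, hg, hh, mul_add, add_mul]
  abel

section NegOnePow

variable {M : Type*} [Monoid M] [HasDistribNeg M]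

theorem neg_one_pow_natCast_zmod_two_val (n : ℕ) : (-1 : M) ^ (n : ZMod 2).val = (-1) ^ n := by
  rw [ZMod.val_natCast]
  conv_rhs => rw [← Nat.mod_add_div n 2, pow_add, pow_mul, neg_one_sq, one_pow, mul_one]

theorem neg_one_pow_zmod_two_val_add (m n : ZMod 2) :
    (-1 : M) ^ (m + n).val = (-1) ^ m.val * (-1) ^ n.val := by
  rw [← pow_add, ← neg_one_pow_natCast_zmod_two_val (m.val + n.val), Nat.cast_add,
    ZMod.natCast_zmod_val, ZMod.natCast_zmod_val]

end NegOnePow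

namespace GA

def xExpMod2 (a : GA) : ZMod 2 := ZMod.castHom (by norm_num : 2 ∣ 4) (ZMod 2) a.i

theorem xExpMod2_mul (a b : GA) : (a * b).xExpMod2 = a.xExpMod2 + b.xExpMod2 := by
  have hi : (a * b).i = a.i + (if b.q = 1 ∧ a.j = 1 then 2 else 0) + b.i := rfl
  have htwist : ZMod.castHom (by norm_num : 2 ∣ 4) (ZMod 2)
      (if b.q = 1 ∧ a.j = 1 then 2 else 0) = 0 := by
    split_ifs <;> rfl
  rw [xExpMod2, xExpMod2, xExpMod2, hi, map_add, map_add, htwist, add_zero]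

theorem ωA_eq_neg_one_pow (a b c : GA) : ωA a b c = (-1) ^ (a.j * b.xExpMod2 * c.q).val := by
  have hexp : a.j * b.xExpMod2 * c.q = ((a.j.val * b.i.val * c.q.val : ℕ) : ZMod 2) := by
    push_cast [ZMod.natCast_val, ZMod.cast_id', xExpMod2, ZMod.castHom_apply]
    rfl
  rw [ωA, hexp, neg_one_pow_natCast_zmod_two_val]

theorem mk_eq_tA_pow_mul_xA_pow_mul_yA_pow :
    ∀ q i j, (⟨q, i, j⟩ : GA) = tA ^ q.val * xA ^ i.val * yA ^ j.val := by
  decide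

theorem closure_xA_yA_tA_eq_top : Subgroup.closure {xA, yA, tA} = ⊤ := by
  rw [eq_top_iff]
  rintro ⟨q, i, j⟩ -
  have hmem : ∀ g ∈ ({xA, yA, tA} : Set GA), g ∈ Subgroup.closure {xA, yA, tA} :=
    fun _ hg ↦ Subgroup.subset_closure hg
  rw [mk_eq_tA_pow_mul_xA_pow_mul_yA_pow]
  exact mul_mem (mul_mem (pow_mem (hmem _ (by simp)) _) (pow_mem (hmem _ (by simp)) _))
    (pow_mem (hmem _ (by simp)) _)

end GA

/-- The group `G = F ⋈ Γ` above satisfies the presentation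
`⟨x, y, t | x⁴ = y² = t² = 1, xy = yx, xt = tx, tyt = x²y⟩` (with order 16), and the
function `ω(t^q x^i y^j, t^r x^k y^l, t^s x^m y^n) = (−1)^(jks)` is a 3-cocycle on `G`:
`ω(b,c,d) ω(a,bc,d) ω(a,b,c) = ω(ab,c,d) ω(a,b,cd)` for all `a, b, c, d ∈ G`. -/
theorem stmt_6 :
    (xA ^ 4 = 1 ∧ yA ^ 2 = 1 ∧ tA ^ 2 = 1 ∧ xA * yA = yA * xA ∧ xA * tA = tA * xA ∧
      tA * yA * tA = xA ^ 2 * yA ∧ Subgroup.closure {xA, yA, tA} = ⊤ ∧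
      Nat.card GA = 16) ∧
    ∀ a b c d : GA,
      ωA b c d * ωA a (b * c) d * ωA a b c = ωA (a * b) c d * ωA a b (c * d) := by
  refine ⟨⟨by decide, by decide, by decide, by decide, by decide, by decide,
    GA.closure_xA_yA_tA_eq_top, by rw [Nat.card_eq_fintype_card]; rfl⟩, fun a b c d ↦ ?_⟩
  have hcocycle := cup_product_cocycle GA.j GA.xExpMod2 GA.q (fun _ _ ↦ rfl) GA.xExpMod2_mul
    (fun _ _ ↦ rfl) a b c d
  simp only [GA.ωA_eq_neg_one_pow, ← neg_one_pow_zmod_two_val_add, hcocycle]
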